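/- arXiv:math/0412156 — 5 statements merged into one kernel-verified Lean document; each statement's English description precedes it below -/
import Mathlib

section
/- Every element of order 2 in Q = ℤ² ⋊ ℤ/4 is conjugate in Q to exactly one of e₁t², (e₁+e₂)t², or t²; i.e. up to conjugacy the subgroups of order two of Q are ⟨e₁t²⟩, ⟨e₁e₂t²⟩ and ⟨t²⟩, and these three are pairwise non-conjugate. -/
open SemidirectProduct

/-- The automorphism of `ℤ²` given by multiplication by `i`: `(a,b) ↦ (-b,a)`. -/
def J : (ℤ × ℤ) ≃+ (ℤ × ℤ) where
  toFun p := (-p.2, p.1)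
  invFun p := (p.2, -p.1)
  left_inv p := by simp
  right_inv p := by simp
  map_add' p q := by simp [Prod.ext_iff]; ring

abbrev Z2 := Multiplicative (ℤ × ℤ)

def Jm : MulAut Z2 := AddEquiv.toMultiplicative J

lemma Jm_pow_four : Jm ^ 4 = 1 := by
  refine MulEquiv.ext fun x => ?_
  show Jm (Jm (Jm (Jm x))) = x
  simp [Jm, J, AddEquiv.toMultiplicative, Prod.ext_iff]

lemma Jm_pow_mod (n : ℕ) : Jm ^ (n % 4) = Jm ^ n := by
  conv_rhs => rw [← Nat.div_add_mod n 4]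
  rw [pow_add, pow_mul, Jm_pow_four, one_pow, one_mul]

/-- The action of `ℤ/4` on `ℤ²` by powers of multiplication by `i`. -/
def phiQ : Multiplicative (ZMod 4) →* MulAut Z2 where
  toFun s := Jm ^ (Multiplicative.toAdd s).val
  map_one' := by
    show Jm ^ (0 : ZMod 4).val = 1
    simp
  map_mul' a b := by
    show Jm ^ ((Multiplicative.toAdd a + Multiplicative.toAdd b : ZMod 4)).val = _
    rw [ZMod.val_add, Jm_pow_mod, pow_add]

/-- `Q = ℤ² ⋊ ℤ/4`. -/
abbrev Q := Z2 ⋊[phiQ] Multiplicative (ZMod 4)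

/-- The generator `t` of the `ℤ/4`-factor of `Q`. -/
def tQ : Q := inr (Multiplicative.ofAdd (1 : ZMod 4))

/-- The inclusion `ℤ² → Q`. -/
def ιQ (x : ℤ × ℤ) : Q := inl (Multiplicative.ofAdd x)

/-!
An element of order two has the form `x t²` with `x ∈ ℤ²`, and conjugating it by `y tᵏ` gives
`(2y + iᵏ x) t²`. So the conjugacy class of `x t²` is determined by `x mod 2` up to swapping the
two coordinates, which takes exactly the three values `(1,0) ~ (0,1)`, `(1,1)` and `(0,0)`.
-/

lemma phiQ_two_apply (z : Z2) : phiQ (Multiplicative.ofAdd 2) z = z⁻¹ := rfl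

lemma ιQ_mul_tQ_sq (x : ℤ × ℤ) :
    ιQ x * tQ ^ 2 = (⟨Multiplicative.ofAdd x, Multiplicative.ofAdd 2⟩ : Q) := by
  ext : 1
  · simp [ιQ, tQ, sq]
  · rfl

lemma ιQ_zero : ιQ 0 = 1 := rfl

lemma conj_mk_two (c : Q) (z : Z2) :
    c * ⟨z, Multiplicative.ofAdd 2⟩ * c⁻¹
      = ⟨c.left * c.left * phiQ c.right z, Multiplicative.ofAdd 2⟩ := by
  ext : 1
  · show c.left * phiQ c.right z *
        phiQ (c.right * Multiplicative.ofAdd 2) (phiQ c.right⁻¹ c.left⁻¹) = _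
    rw [← MulAut.mul_apply, ← map_mul, mul_comm c.right, mul_inv_cancel_right, phiQ_two_apply,
      inv_inv, mul_right_comm]
  · show c.right * Multiplicative.ofAdd 2 * c.right⁻¹ = _
    rw [mul_comm c.right, mul_inv_cancel_right]

lemma isConj_ιQ_mul_tQ_sq_add_two_nsmul (x y : ℤ × ℤ) :
    IsConj (ιQ x * tQ ^ 2) (ιQ (x + 2 • y) * tQ ^ 2) := by
  refine isConj_iff.2 ⟨ιQ y, ?_⟩
  rw [ιQ_mul_tQ_sq, ιQ_mul_tQ_sq, conj_mk_two]
  congr 1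
  show Multiplicative.ofAdd (y + y + x) = _
  rw [two_nsmul, add_comm]

lemma isConj_ιQ_mul_tQ_sq_J (x : ℤ × ℤ) : IsConj (ιQ x * tQ ^ 2) (ιQ (J x) * tQ ^ 2) := by
  refine isConj_iff.2 ⟨tQ, ?_⟩
  rw [ιQ_mul_tQ_sq, ιQ_mul_tQ_sq, conj_mk_two]
  congr 1
  show 1 * 1 * Jm (Multiplicative.ofAdd x) = _
  rw [one_mul, one_mul]
  rfl

def parityClass (x : ℤ × ℤ) : Sym2 (ZMod 2) := s((x.1 : ZMod 2), (x.2 : ZMod 2))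

lemma parityClass_J (x : ℤ × ℤ) : parityClass (J x) = parityClass x := by
  simp only [parityClass, J, AddEquiv.coe_mk, Equiv.coe_fn_mk, Int.cast_neg,
    ZMod.neg_eq_self_mod_two, Sym2.eq_swap]

lemma parityClass_phiQ (s : Multiplicative (ZMod 4)) (z : Z2) :
    parityClass (Multiplicative.toAdd (phiQ s z)) = parityClass (Multiplicative.toAdd z) := by
  show parityClass (Multiplicative.toAdd ((Jm ^ (Multiplicative.toAdd s).val) z)) = _
  induction (Multiplicative.toAdd s).val with
  | zero => rfl
  | succ n ih => rw [pow_succ', MulAut.mul_apply, ← ih]; exact parityClass_J _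

lemma parityClass_two_nsmul_add (y x : ℤ × ℤ) : parityClass (2 • y + x) = parityClass x := by
  simp only [parityClass, Prod.fst_add, Prod.snd_add, two_nsmul,
    Int.cast_add, CharTwo.add_self_eq_zero, zero_add]

lemma parityClass_eq_of_isConj {x x' : ℤ × ℤ} (h : IsConj (ιQ x * tQ ^ 2) (ιQ x' * tQ ^ 2)) :
    parityClass x = parityClass x' := by
  obtain ⟨c, hc⟩ := isConj_iff.1 h
  rw [ιQ_mul_tQ_sq, ιQ_mul_tQ_sq, conj_mk_two] at hc
  have hx' : x' = 2 • Multiplicative.toAdd c.left +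
      Multiplicative.toAdd (phiQ c.right (.ofAdd x)) := by
    rw [two_nsmul]; exact (congrArg (Multiplicative.toAdd ∘ SemidirectProduct.left) hc).symm
  rw [hx', parityClass_two_nsmul_add, parityClass_phiQ]
  rfl

lemma right_eq_two_of_orderOf_eq_two {g : Q} (hg : orderOf g = 2) :
    g.right = Multiplicative.ofAdd 2 := by
  have hsq : g * g = 1 := by rw [← sq, ← hg, pow_orderOf_eq_one]
  have hright : g.right * g.right = 1 := congrArg SemidirectProduct.right hsq
  obtain hone | htwo := (by decide : ∀ s : Multiplicative (ZMod 4),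
    s * s = 1 → s = 1 ∨ s = .ofAdd 2) _ hright
  · have hleft : g.left ^ 2 = 1 := by
      simpa [hone, sq] using congrArg SemidirectProduct.left hsq
    have : g = 1 := SemidirectProduct.ext (sq_eq_one.1 hleft) hone
    simp [this] at hg
  · exact htwo

lemma exists_eq_ιQ_mul_tQ_sq_of_orderOf_eq_two {g : Q} (hg : orderOf g = 2) :
    ∃ x : ℤ × ℤ, g = ιQ x * tQ ^ 2 := by
  refine ⟨Multiplicative.toAdd g.left, ?_⟩
  rw [ιQ_mul_tQ_sq]
  exact SemidirectProduct.ext rfl (right_eq_two_of_orderOf_eq_two hg)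

lemma isConj_ιQ_emod_two_mul_tQ_sq (x : ℤ × ℤ) :
    IsConj (ιQ (x.1 % 2, x.2 % 2) * tQ ^ 2) (ιQ x * tQ ^ 2) := by
  convert isConj_ιQ_mul_tQ_sq_add_two_nsmul (x.1 % 2, x.2 % 2) (x.1 / 2, x.2 / 2) using 3
  ext <;> simp only [Prod.fst_add, Prod.snd_add, Prod.smul_mk, nsmul_eq_mul, Nat.cast_ofNat] <;>
    omega

lemma isConj_of_orderOf_eq_two {g : Q} (hg : orderOf g = 2) :
    IsConj (ιQ (1, 0) * tQ ^ 2) g ∨ IsConj (ιQ ((1, 0) + (0, 1)) * tQ ^ 2) g ∨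
      IsConj (tQ ^ 2) g := by
  obtain ⟨x, rfl⟩ := exists_eq_ιQ_mul_tQ_sq_of_orderOf_eq_two hg
  have hx := isConj_ιQ_emod_two_mul_tQ_sq x
  rcases Int.emod_two_eq_zero_or_one x.1 with h1 | h1 <;>
    rcases Int.emod_two_eq_zero_or_one x.2 with h2 | h2 <;> rw [h1, h2] at hx
  · exact .inr (.inr (by simpa only [Prod.mk_zero_zero, ιQ_zero, one_mul] using hx))
  · exact .inl ((isConj_ιQ_mul_tQ_sq_J (1, 0)).trans hx)
  · exact .inl hx
  · exact .inr (.inl hx)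

/-- Every element of order `2` in `Q = ℤ² ⋊ ℤ/4` is conjugate to exactly one of
`e₁t²`, `(e₁+e₂)t²`, `t²`; in particular these three elements are pairwise non-conjugate. -/
theorem stmt_4 :
    (∀ g : Q, orderOf g = 2 →
        (IsConj (ιQ (1, 0) * tQ ^ 2) g ∨ IsConj (ιQ ((1, 0) + (0, 1)) * tQ ^ 2) g ∨
          IsConj (tQ ^ 2) g)) ∧
    ¬ IsConj (ιQ (1, 0) * tQ ^ 2) (ιQ ((1, 0) + (0, 1)) * tQ ^ 2) ∧
    ¬ IsConj (ιQ (1, 0) * tQ ^ 2) (tQ ^ 2) ∧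
    ¬ IsConj (ιQ ((1, 0) + (0, 1)) * tQ ^ 2) (tQ ^ 2) := by
  have not_isConj_tQ_sq {x : ℤ × ℤ} (h : parityClass x ≠ parityClass 0) :
      ¬ IsConj (ιQ x * tQ ^ 2) (tQ ^ 2) := by
    simpa only [ιQ_zero, one_mul] using mt parityClass_eq_of_isConj h
  exact ⟨fun g hg => isConj_of_orderOf_eq_two hg, mt parityClass_eq_of_isConj (by decide),
    not_isConj_tQ_sq (by decide), not_isConj_tQ_sq (by decide)⟩
end

section
/- The maximal finite subgroups of Q = ℤ² ⋊ ℤ/4 are, up to conjugacy, exactly M₀ = ⟨t⟩ ≅ ℤ/4, M₁ = ⟨e₁t⟩ ≅ ℤ/4, and M₂ = ⟨e₁t²⟩ ≅ ℤ/2. -/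
open SemidirectProduct

open Pointwise

/-- A subgroup is maximal finite if it is finite and not properly contained in a finite
subgroup. -/
def IsMaximalFinite {Γ : Type*} [Group Γ] (M : Subgroup Γ) : Prop :=
  Finite M ∧ ∀ K : Subgroup Γ, Finite K → M ≤ K → M = K

/-!
A finite subgroup of `Q` meets the torsion-free lattice `ℤ²` trivially, so the rotation part
`Q → ℤ/4` is injective on it and it is cyclic, generated by some `x tˢ`. Conjugating by a
translation `v` replaces `x t` by `(x + v - Jv) t` and `x t²` by `(x + 2v) t²`. Since `(1 - J)ℤ²`
is the lattice of vectors with even coordinate sum, `x t` is conjugate to `t` or to `e₁t`, and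
`x t²` is conjugate to `e₁t²` when `x₁ + x₂` is odd. When `x₁ + x₂` is even, `x t²` is the
square of some `y t`, so `⟨x t²⟩` is not maximal. Finally `x tˢ ↦ x₁ + x₂ mod 2` is a
homomorphism to `ℤ/2`; it kills squares, so no cyclic group of order 4 contains `e₁t²`, and it
separates the conjugates of `⟨t⟩` from `⟨e₁t⟩`.
-/

open Subgroup (zpowers mem_zpowers)

section

variable {Γ : Type*} [Group Γ]

theorem MulAut.smul_zpowers (σ : MulAut Γ) (a : Γ) : σ • zpowers a = zpowers (σ a) := by
  rw [Subgroup.pointwise_smul_def]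
  exact MonoidHom.map_zpowers _ _

theorem IsConj.exists_conj_smul_zpowers {a b : Γ} (h : IsConj a b) :
    ∃ c : Γ, MulAut.conj c • zpowers a = zpowers b := by
  obtain ⟨c, rfl⟩ := isConj_iff.1 h
  exact ⟨c, MulAut.smul_zpowers _ a⟩

theorem conj_smul_zpowers_ne_of_orderOf_ne {a b : Γ} (h : orderOf a ≠ orderOf b) (c : Γ) :
    MulAut.conj c • zpowers a ≠ zpowers b := by
  rw [MulAut.smul_zpowers]
  intro hab
  apply h
  rw [← MulEquiv.orderOf_eq (MulAut.conj c) a, ← Nat.card_zpowers, hab, Nat.card_zpowers]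

theorem conj_smul_zpowers_ne_of_map {A : Type*} [CommGroup A] (f : Γ →* A) {a b : Γ}
    (h : f b ∉ zpowers (f a)) (c : Γ) : MulAut.conj c • zpowers a ≠ zpowers b := by
  rw [MulAut.smul_zpowers]
  intro hab
  obtain ⟨k, hk⟩ := hab ▸ mem_zpowers b
  refine h ⟨k, ?_⟩
  rw [← hk, map_zpow, MulAut.conj_apply, map_mul, map_mul, map_inv, mul_inv_cancel_comm]

theorem isConj_of_mul_eq {g a b : Γ} (h : g * a = b * g) : IsConj a b :=
  isConj_iff.2 ⟨g, mul_inv_eq_iff_eq_mul.2 h⟩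

theorem IsMaximalFinite.eq_of_le {H M : Subgroup Γ} (hH : IsMaximalFinite H)
    (hM : IsMaximalFinite M) (h : H ≤ M) : H = M :=
  hH.2 M hM.1 h

theorem IsMaximalFinite.smul {H : Subgroup Γ} (hH : IsMaximalFinite H) (σ : MulAut Γ) :
    IsMaximalFinite (σ • H) := by
  obtain ⟨hH_finite, hH_max⟩ := hH
  refine ⟨Finite.of_equiv H (Subgroup.equivSMul σ H).toEquiv, fun K hK hle => ?_⟩
  have hK' : Finite ↥(σ⁻¹ • K) := Finite.of_equiv K (Subgroup.equivSMul σ⁻¹ K).toEquiv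
  have hle' : H ≤ σ⁻¹ • K := by
    rwa [← Subgroup.pointwise_smul_le_pointwise_smul_iff (a := σ), smul_inv_smul]
  rw [hH_max _ hK' hle', smul_inv_smul]

theorem mem_zpowers_of_map_mem_zpowers {G : Type*} [Group G] {f : Γ →* G} {K : Subgroup Γ}
    (hf : Function.Injective (f.comp K.subtype)) {g h : Γ} (hg : g ∈ K) (hh : h ∈ K)
    (hfh : f h ∈ zpowers (f g)) : h ∈ zpowers g := by
  obtain ⟨k, hk⟩ := hfh
  have : (⟨g ^ k, K.zpow_mem hg k⟩ : K) = ⟨h, hh⟩ := hf (by simpa using hk)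
  exact ⟨k, congrArg Subtype.val this⟩

theorem ZMod.mem_zpowers_ofAdd_one {n : ℕ} [NeZero n] (a : Multiplicative (ZMod n)) :
    a ∈ zpowers (Multiplicative.ofAdd 1) :=
  ⟨(Multiplicative.toAdd a).val, by
    show Multiplicative.ofAdd 1 ^ ((Multiplicative.toAdd a).val : ℤ) = a
    rw [← ofAdd_zsmul, zsmul_one, Int.cast_natCast, ZMod.natCast_zmod_val, ofAdd_toAdd]⟩

end

namespace SemidirectProduct

variable {N G : Type*} [Group N] [Group G] [IsMulTorsionFree N] {φ : G →* MulAut N}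

theorem eq_one_of_isOfFinOrder {g : N ⋊[φ] G} (hg : IsOfFinOrder g) (hright : rightHom g = 1) :
    g = 1 := by
  have hg_inl : g = inl g.left := by ext <;> simp_all
  rw [hg_inl, inl_injective.isOfFinOrder_iff (f := inl)] at hg
  rw [hg_inl, hg.eq_one', map_one]

theorem injective_rightHom_comp_subtype (K : Subgroup (N ⋊[φ] G)) [Finite K] :
    Function.Injective (rightHom.comp K.subtype) := by
  refine (injective_iff_map_eq_one _).2 fun x hx => Subtype.ext ?_
  have hx_fin : IsOfFinOrder (K.subtype x) :=
    K.subtype_injective.isOfFinOrder_iff.2 (isOfFinOrder_of_finite x)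
  exact eq_one_of_isOfFinOrder hx_fin hx

end SemidirectProduct

namespace Q

open Multiplicative

/-- The element `x tˢ`. -/
def mk (x : ℤ × ℤ) (s : ZMod 4) : Q := ⟨ofAdd x, ofAdd s⟩

def rot (s : ZMod 4) (y : ℤ × ℤ) : ℤ × ℤ := toAdd (phiQ (ofAdd s) (ofAdd y))

theorem exists_eq_mk (g : Q) : ∃ x s, g = mk x s := ⟨_, _, rfl⟩

theorem mk_mul_mk (x y : ℤ × ℤ) (s r : ZMod 4) : mk x s * mk y r = mk (x + rot s y) (s + r) :=
  rfl

theorem mk_inj {x y : ℤ × ℤ} {s r : ZMod 4} : mk x s = mk y r ↔ x = y ∧ s = r := by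
  simp [mk, SemidirectProduct.ext_iff]

theorem one_eq_mk : (1 : Q) = mk 0 0 := rfl

@[simp]
theorem rightHom_mk (x : ℤ × ℤ) (s : ZMod 4) : rightHom (mk x s) = ofAdd s := rfl

theorem rot_add (s r : ZMod 4) (y : ℤ × ℤ) : rot (s + r) y = rot s (rot r y) := by
  simp [rot, ofAdd_add, MulAut.mul_apply]

@[simp]
theorem rot_zero (y : ℤ × ℤ) : rot 0 y = y := by
  simp [rot]

@[simp]
theorem rot_one (y : ℤ × ℤ) : rot 1 y = (-y.2, y.1) := by
  show toAdd ((Jm ^ 1) (ofAdd y)) = _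
  rw [pow_one]
  rfl

@[simp]
theorem rot_two (y : ℤ × ℤ) : rot 2 y = -y := by
  rw [show (2 : ZMod 4) = 1 + 1 from rfl, rot_add]
  simp [Prod.ext_iff]

@[simp]
theorem rot_three (y : ℤ × ℤ) : rot 3 y = (y.2, -y.1) := by
  rw [show (3 : ZMod 4) = 1 + 2 from rfl, rot_add]
  simp

theorem tQ_eq_mk : tQ = mk 0 1 := rfl

theorem ιQ_mul_tQ_eq_mk : ιQ (1, 0) * tQ = mk (1, 0) 1 := rfl

theorem ιQ_mul_tQ_sq_eq_mk : ιQ (1, 0) * tQ ^ 2 = mk (1, 0) 2 := rfl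

theorem zmod_four_cases (s : ZMod 4) : s = 0 ∨ s = 1 ∨ s = 2 ∨ s = 3 := by
  revert s
  decide

theorem parity_rot (s : ZMod 4) (y : ℤ × ℤ) :
    (((rot s y).1 + (rot s y).2 : ℤ) : ZMod 2) = ((y.1 + y.2 : ℤ) : ZMod 2) := by
  rw [ZMod.intCast_eq_intCast_iff_dvd_sub]
  obtain rfl | rfl | rfl | rfl := zmod_four_cases s
  · simp
  · exact ⟨y.2, by simp; ring⟩
  · exact ⟨y.1 + y.2, by simp; ring⟩
  · exact ⟨y.1, by simp; ring⟩

def parity : Q →* Multiplicative (ZMod 2) where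
  toFun g := ofAdd (((toAdd g.left).1 + (toAdd g.left).2 : ℤ) : ZMod 2)
  map_one' := rfl
  map_mul' g h := by
    obtain ⟨x, s, rfl⟩ := exists_eq_mk g
    obtain ⟨y, r, rfl⟩ := exists_eq_mk h
    show ofAdd (((x + rot s y).1 + (x + rot s y).2 : ℤ) : ZMod 2) =
      ofAdd ((x.1 + x.2 : ℤ) : ZMod 2) * ofAdd ((y.1 + y.2 : ℤ) : ZMod 2)
    rw [← ofAdd_add, ← parity_rot s y, Prod.fst_add, Prod.snd_add]
    push_cast
    ring_nf

@[simp]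
theorem parity_mk (x : ℤ × ℤ) (s : ZMod 4) :
    parity (mk x s) = ofAdd ((x.1 + x.2 : ℤ) : ZMod 2) := rfl

theorem sq_mk_one (x : ℤ × ℤ) : mk x 1 ^ 2 = mk (x.1 - x.2, x.1 + x.2) 2 := by
  rw [sq, mk_mul_mk, mk_inj]
  exact ⟨by simp [Prod.ext_iff, sub_eq_add_neg, add_comm], rfl⟩

theorem sq_mk_two (x : ℤ × ℤ) : mk x 2 ^ 2 = 1 := by
  rw [sq, mk_mul_mk, one_eq_mk, mk_inj]
  exact ⟨by simp, rfl⟩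

theorem orderOf_mk_one (x : ℤ × ℤ) : orderOf (mk x 1) = 4 := by
  refine orderOf_eq_prime_pow (p := 2) (n := 1) ?_ ?_
  · rw [pow_one, sq_mk_one, one_eq_mk, mk_inj]
    exact fun h => absurd h.2 (by decide)
  · rw [pow_succ, pow_one, pow_mul, sq_mk_one, sq_mk_two]

theorem orderOf_mk_two (x : ℤ × ℤ) : orderOf (mk x 2) = 2 := by
  refine orderOf_eq_prime (sq_mk_two x) ?_
  rw [Ne, one_eq_mk, mk_inj]
  exact fun h => absurd h.2 (by decide)

theorem isConj_mk_one (x : ℤ × ℤ) :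
    IsConj (mk 0 1) (mk x 1) ∨ IsConj (mk (1, 0) 1) (mk x 1) := by
  obtain ⟨b, hb | hb⟩ := Int.even_or_odd' (x.1 + x.2)
  · refine .inl (isConj_of_mul_eq (g := mk (b - x.2, b) 0) ?_)
    rw [mk_mul_mk, mk_mul_mk, mk_inj]
    exact ⟨by simp [Prod.ext_iff]; omega, rfl⟩
  · refine .inr (isConj_of_mul_eq (g := mk (b - x.2, b) 0) ?_)
    rw [mk_mul_mk, mk_mul_mk, mk_inj]
    exact ⟨by simp [Prod.ext_iff]; omega, rfl⟩

theorem isConj_mk_two_of_odd {x : ℤ × ℤ} (hx : Odd (x.1 + x.2)) :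
    IsConj (mk (1, 0) 2) (mk x 2) := by
  obtain ⟨k, hk⟩ := hx
  obtain ⟨a, ha | ha⟩ := Int.even_or_odd' x.1
  · refine isConj_of_mul_eq (g := mk (a, k - a) 1) ?_
    rw [mk_mul_mk, mk_mul_mk, mk_inj]
    exact ⟨by simp [Prod.ext_iff]; omega, rfl⟩
  · refine isConj_of_mul_eq (g := mk (a, k - a) 0) ?_
    rw [mk_mul_mk, mk_mul_mk, mk_inj]
    exact ⟨by simp [Prod.ext_iff]; omega, rfl⟩

theorem exists_sq_eq_mk_two_of_even {x : ℤ × ℤ} (hx : Even (x.1 + x.2)) :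
    ∃ y, mk y 1 ^ 2 = mk x 2 := by
  obtain ⟨b, hb⟩ := hx
  refine ⟨(b, b - x.1), ?_⟩
  rw [sq_mk_one, mk_inj]
  exact ⟨by simp [Prod.ext_iff]; omega, rfl⟩

def models : Set Q := {mk 0 1, mk (1, 0) 1, mk (1, 0) 2}

theorem exists_model_isConj_of_rightHom_eq_one {g : Q} (hg : rightHom g = ofAdd 1) :
    ∃ m ∈ models, IsConj m g := by
  obtain ⟨x, s, rfl⟩ := exists_eq_mk g
  obtain rfl : s = 1 := ofAdd.injective hg
  rcases isConj_mk_one x with h | h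
  · exact ⟨_, .inl rfl, h⟩
  · exact ⟨_, .inr (.inl rfl), h⟩

theorem exists_model_isConj_mem_zpowers {g : Q} (hg : IsOfFinOrder g) :
    ∃ m ∈ models, ∃ h, IsConj m h ∧ g ∈ zpowers h := by
  obtain ⟨x, s, rfl⟩ := exists_eq_mk g
  obtain rfl | rfl | rfl | rfl := zmod_four_cases s
  · rw [eq_one_of_isOfFinOrder hg rfl]
    exact ⟨_, .inl rfl, _, .refl _, Subgroup.one_mem _⟩
  · obtain ⟨m, hm, hconj⟩ := exists_model_isConj_of_rightHom_eq_one (g := mk x 1) rfl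
    exact ⟨m, hm, _, hconj, mem_zpowers _⟩
  · rcases Int.even_or_odd (x.1 + x.2) with heven | hodd
    · obtain ⟨y, hy⟩ := exists_sq_eq_mk_two_of_even heven
      obtain ⟨m, hm, hconj⟩ := exists_model_isConj_of_rightHom_eq_one (g := mk y 1) rfl
      exact ⟨m, hm, _, hconj, hy ▸ Subgroup.pow_mem _ (mem_zpowers _) 2⟩
    · exact ⟨_, .inr (.inr rfl), _, isConj_mk_two_of_odd hodd, mem_zpowers _⟩
  · obtain ⟨m, hm, hconj⟩ := exists_model_isConj_of_rightHom_eq_one (g := (mk x 3)⁻¹) rfl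
    refine ⟨m, hm, _, hconj, ?_⟩
    rw [Subgroup.zpowers_inv]
    exact mem_zpowers _

theorem exists_le_conj_smul_zpowers_model (K : Subgroup Q) [Finite K] :
    ∃ m ∈ models, ∃ c : Q, K ≤ MulAut.conj c • zpowers m := by
  have hK : IsCyclic K := isCyclic_of_injective _ (injective_rightHom_comp_subtype K)
  obtain ⟨g, rfl⟩ := (Subgroup.isCyclic_iff_exists_zpowers_eq_top K).1 hK
  obtain ⟨m, hm, h, hconj, hgh⟩ :=
    exists_model_isConj_mem_zpowers (finite_zpowers.1 (Set.toFinite (zpowers g : Set Q)))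
  obtain ⟨c, hc⟩ := hconj.exists_conj_smul_zpowers
  exact ⟨m, hm, c, hc ▸ (Subgroup.zpowers_le.2 hgh)⟩

theorem isMaximalFinite_zpowers_mk_one (x : ℤ × ℤ) : IsMaximalFinite (zpowers (mk x 1)) := by
  have hfin : IsOfFinOrder (mk x 1) := orderOf_pos_iff.1 (by simp [orderOf_mk_one])
  refine ⟨hfin.finite_zpowers.to_subtype, fun K hK hle => le_antisymm hle fun h hh => ?_⟩
  exact mem_zpowers_of_map_mem_zpowers (injective_rightHom_comp_subtype K)
    (hle (mem_zpowers _)) hh (ZMod.mem_zpowers_ofAdd_one _)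

theorem rightHom_mem_zpowers_or_sq_eq (h : Q) :
    rightHom h ∈ zpowers (ofAdd (2 : ZMod 4)) ∨ rightHom (h ^ 2) = ofAdd 2 := by
  obtain ⟨x, s, rfl⟩ := exists_eq_mk h
  obtain rfl | rfl | rfl | rfl := zmod_four_cases s
  · exact .inl ⟨0, rfl⟩
  · exact .inr rfl
  · exact .inl ⟨1, rfl⟩
  · exact .inr (by rw [map_pow, rightHom_mk]; rfl)

theorem isMaximalFinite_zpowers_mk_two : IsMaximalFinite (zpowers (mk (1, 0) 2)) := by
  have hfin : IsOfFinOrder (mk (1, 0) 2) := orderOf_pos_iff.1 (by simp [orderOf_mk_two])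
  refine ⟨hfin.finite_zpowers.to_subtype, fun K hK hle => le_antisymm hle fun h hh => ?_⟩
  have hinj := injective_rightHom_comp_subtype K
  have hg : mk (1, 0) 2 ∈ K := hle (mem_zpowers _)
  refine (rightHom_mem_zpowers_or_sq_eq h).elim (mem_zpowers_of_map_mem_zpowers hinj hg hh)
    fun hsq => ?_
  have h_sq : h ^ 2 = mk (1, 0) 2 := congrArg Subtype.val
    (hinj (a₁ := ⟨h ^ 2, K.pow_mem hh 2⟩) (a₂ := ⟨_, hg⟩) hsq)
  have hpar : parity h ^ 2 = 1 := by
    generalize parity h = p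
    revert p
    decide
  rw [← map_pow, h_sq, parity_mk] at hpar
  exact absurd hpar (by decide)

theorem isMaximalFinite_zpowers_of_mem_models {m : Q} (hm : m ∈ models) :
    IsMaximalFinite (zpowers m) := by
  rcases hm with rfl | rfl | rfl
  · exact isMaximalFinite_zpowers_mk_one 0
  · exact isMaximalFinite_zpowers_mk_one (1, 0)
  · exact isMaximalFinite_zpowers_mk_two

theorem isMaximalFinite_iff (H : Subgroup Q) :
    IsMaximalFinite H ↔ ∃ m ∈ models, ∃ c : Q, H = MulAut.conj c • zpowers m := by
  refine ⟨fun hH => ?_, ?_⟩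
  · have := hH.1
    obtain ⟨m, hm, c, hle⟩ := exists_le_conj_smul_zpowers_model H
    exact ⟨m, hm, c, hH.eq_of_le ((isMaximalFinite_zpowers_of_mem_models hm).smul _) hle⟩
  · rintro ⟨m, hm, c, rfl⟩
    exact (isMaximalFinite_zpowers_of_mem_models hm).smul _

end Q

/-- The maximal finite subgroups of `Q = ℤ² ⋊ ℤ/4` are, up to conjugacy, exactly
`M₀ = ⟨t⟩ ≅ ℤ/4`, `M₁ = ⟨e₁t⟩ ≅ ℤ/4` and `M₂ = ⟨e₁t²⟩ ≅ ℤ/2`. -/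
theorem stmt_6 :
    (∀ H : Subgroup Q, IsMaximalFinite H ↔
      ∃ q : Q,
        H = MulAut.conj q • Subgroup.zpowers tQ ∨
        H = MulAut.conj q • Subgroup.zpowers (ιQ (1, 0) * tQ) ∨
        H = MulAut.conj q • Subgroup.zpowers (ιQ (1, 0) * tQ ^ 2)) ∧
    orderOf tQ = 4 ∧ orderOf (ιQ (1, 0) * tQ) = 4 ∧ orderOf (ιQ (1, 0) * tQ ^ 2) = 2 ∧
    (∀ q : Q, MulAut.conj q • Subgroup.zpowers tQ ≠ Subgroup.zpowers (ιQ (1, 0) * tQ)) ∧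
    (∀ q : Q, MulAut.conj q • Subgroup.zpowers tQ ≠ Subgroup.zpowers (ιQ (1, 0) * tQ ^ 2)) ∧
    (∀ q : Q,
      MulAut.conj q • Subgroup.zpowers (ιQ (1, 0) * tQ) ≠
        Subgroup.zpowers (ιQ (1, 0) * tQ ^ 2)) := by
  rw [Q.ιQ_mul_tQ_sq_eq_mk, Q.ιQ_mul_tQ_eq_mk, Q.tQ_eq_mk]
  refine ⟨fun H => ?_, Q.orderOf_mk_one _, Q.orderOf_mk_one _, Q.orderOf_mk_two _,
    conj_smul_zpowers_ne_of_map Q.parity ?_, conj_smul_zpowers_ne_of_orderOf_ne ?_,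
    conj_smul_zpowers_ne_of_orderOf_ne ?_⟩
  · simp only [Q.isMaximalFinite_iff, Q.models, Set.mem_insert_iff, Set.mem_singleton_iff,
      exists_eq_or_imp, exists_eq_left, ← exists_or]
  · simp [Subgroup.zpowers_one_eq_bot]
  all_goals simp [Q.orderOf_mk_one, Q.orderOf_mk_two]
end

section
/- Let p: G → Q be the surjection from G = Hei ⋊ ℤ/4 to Q = ℤ² ⋊ ℤ/4 sending z ↦ 1, u ↦ e₁, v ↦ e₂, t ↦ t. Then the preimages of the maximal finite subgroups satisfy: p⁻¹(⟨t⟩) = ⟨t,z⟩ ≅ ℤ/4 × ℤ, p⁻¹(⟨e₁t⟩) = ⟨ut⟩ ≅ ℤ, and p⁻¹(⟨e₁t²⟩) = ⟨ut², z⟩ ≅ ℤ/2 × ℤ. -/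
open SemidirectProduct

/-- The discrete 3-dimensional Heisenberg group: integer triples `(x,y,z)` corresponding to
the upper triangular matrix with `x` in position (1,2), `y` in position (1,3) and `z` in
position (2,3). -/
@[ext] structure Hei where
  x : ℤ
  y : ℤ
  z : ℤ

namespace Hei

instance : Mul Hei := ⟨fun a b => ⟨a.x + b.x, a.y + b.y + a.x * b.z, a.z + b.z⟩⟩
instance : One Hei := ⟨⟨0, 0, 0⟩⟩
instance : Inv Hei := ⟨fun a => ⟨-a.x, -a.y + a.x * a.z, -a.z⟩⟩

@[simp] lemma mul_x (a b : Hei) : (a * b).x = a.x + b.x := rfl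
@[simp] lemma mul_y (a b : Hei) : (a * b).y = a.y + b.y + a.x * b.z := rfl
@[simp] lemma mul_z (a b : Hei) : (a * b).z = a.z + b.z := rfl
@[simp] lemma one_x : (1 : Hei).x = 0 := rfl
@[simp] lemma one_y : (1 : Hei).y = 0 := rfl
@[simp] lemma one_z : (1 : Hei).z = 0 := rfl
@[simp] lemma inv_x (a : Hei) : a⁻¹.x = -a.x := rfl
@[simp] lemma inv_y (a : Hei) : a⁻¹.y = -a.y + a.x * a.z := rfl
@[simp] lemma inv_z (a : Hei) : a⁻¹.z = -a.z := rfl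

instance : Group Hei where
  mul_assoc a b c := by ext <;> simp <;> ring
  one_mul a := by ext <;> simp
  mul_one a := by ext <;> simp
  inv_mul_cancel a := by ext <;> simp

/-- The generator `u` of `Hei`. -/
def u : Hei := ⟨1, 0, 0⟩
/-- The generator `v` of `Hei`. -/
def v : Hei := ⟨0, 0, 1⟩
/-- The central generator `z` of `Hei`. -/
def zz : Hei := ⟨0, 1, 0⟩

end Hei

open SemidirectProduct

set_option linter.unreachableTactic false in
set_option linter.unusedTactic false in
/-- The order-four automorphism of `Hei` sending `u ↦ v`, `v ↦ u⁻¹`, `z ↦ z`; in coordinates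
`(x,y,z) ↦ (-z, y - xz, x)`. -/
def τ : MulAut Hei where
  toFun p := ⟨-p.z, p.y - p.x * p.z, p.x⟩
  invFun p := ⟨p.z, p.y - p.z * p.x, -p.x⟩
  left_inv p := by ext <;> simp <;> ring
  right_inv p := by ext <;> simp <;> ring
  map_mul' a b := by ext <;> simp <;> ring

set_option linter.unreachableTactic false in
set_option linter.unusedTactic false in
lemma τ_pow_four : τ ^ 4 = 1 := by
  refine MulEquiv.ext fun p => ?_
  show τ (τ (τ (τ p))) = p
  ext <;> simp [τ] <;> ring

lemma τ_pow_mod (n : ℕ) : τ ^ (n % 4) = τ ^ n := by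
  conv_rhs => rw [← Nat.div_add_mod n 4]
  rw [pow_add, pow_mul, τ_pow_four, one_pow, one_mul]

/-- The action of `ℤ/4` on `Hei` by powers of `τ`. -/
def φG : Multiplicative (ZMod 4) →* MulAut Hei where
  toFun s := τ ^ (Multiplicative.toAdd s).val
  map_one' := by
    show τ ^ (0 : ZMod 4).val = 1
    simp
  map_mul' a b := by
    show τ ^ ((Multiplicative.toAdd a + Multiplicative.toAdd b : ZMod 4)).val = _
    rw [ZMod.val_add, τ_pow_mod, pow_add]

/-- `G = Hei ⋊ ℤ/4`. -/
abbrev G := Hei ⋊[φG] Multiplicative (ZMod 4)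

/-- The generator `t` of the `ℤ/4`-factor of `G`. -/
def tG : G := inr (Multiplicative.ofAdd (1 : ZMod 4))
/-- The element `u` of `G`. -/
def uG : G := inl Hei.u
/-- The element `v` of `G`. -/
def vG : G := inl Hei.v
/-- The central element `z` of `G`. -/
def zG : G := inl Hei.zz

/-- The projection `Hei →* ℤ²` killing the center. -/
def pH : Hei →* Z2 where
  toFun a := Multiplicative.ofAdd (a.x, a.z)
  map_one' := rfl
  map_mul' a b := rfl

lemma pH_comm (n : ℕ) : ∀ a : Hei, pH ((τ ^ n) a) = (Jm ^ n) (pH a) := by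
  induction n with
  | zero => intro a; rfl
  | succ n ih =>
      intro a
      rw [pow_succ, pow_succ]
      simp only [MulAut.mul_apply]
      rw [ih (τ a)]
      rfl

/-- The canonical projection `p : G → Q` with kernel the central subgroup `⟨z⟩ ≅ ℤ`,
sending `z ↦ 1`, `u ↦ e₁`, `v ↦ e₂` and `t ↦ t`. -/
def p : G →* Q :=
  SemidirectProduct.map pH (MonoidHom.id _) (by
    intro g
    refine MonoidHom.ext fun a => ?_
    show pH ((τ ^ (Multiplicative.toAdd g).val) a) =
      (Jm ^ (Multiplicative.toAdd g).val) (pH a)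
    exact pH_comm _ a)

/-! The map `p` is a central extension with kernel `⟨z⟩`, so the preimage of a cyclic subgroup
`⟨p g⟩` is `⟨g⟩ ⊔ ⟨z⟩ = ⟨g, z⟩`. When the lift `g` has the same order as `p g` (for `t`, of
order 4, and for `u t²`, of order 2) the subgroup `⟨g⟩` meets `⟨z⟩` trivially, and the preimage
is the internal direct product `⟨g⟩ × ⟨z⟩`. Over `⟨e₁t⟩` no such lift exists: `(u t)⁴ = z`, so
the preimage is the infinite cyclic group `⟨u t⟩`. -/

open Subgroup

section CyclicSubgroups

variable {M N : Type*} [Group M] [Group N]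

theorem Subgroup.closure_pair_eq_sup (a b : M) : closure {a, b} = zpowers a ⊔ zpowers b := by
  rw [Set.insert_eq, closure_union, zpowers_eq_closure, zpowers_eq_closure]

theorem Subgroup.closure_pair_pow_eq_zpowers (g : M) (n : ℕ) :
    closure {g, g ^ n} = zpowers g := by
  rw [closure_pair_eq_sup, sup_eq_left, zpowers_le]
  exact pow_mem (mem_zpowers g) n

theorem Subgroup.nonempty_zpowers_mulEquiv_zmod (g : M) :
    Nonempty (zpowers g ≃* Multiplicative (ZMod (orderOf g))) :=
  ⟨(Nat.card_zpowers g ▸ zmodCyclicMulEquiv inferInstance).symm⟩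

theorem Subgroup.nonempty_sup_mulEquiv_prod {K L : Subgroup M}
    (hcomm : ∀ k ∈ K, ∀ l ∈ L, Commute k l) (hdisj : Disjoint K L) :
    Nonempty (↥(K ⊔ L) ≃* K × L) := by
  have comm : ∀ (k : K) (l : L), Commute (K.subtype k) (L.subtype l) := fun k l =>
    hcomm k k.2 l l.2
  have hf : Function.Injective (K.subtype.noncommCoprod L.subtype comm) :=
    (MonoidHom.noncommCoprod_injective _ _ _).2
      ⟨K.subtype_injective, L.subtype_injective, by simpa using hdisj⟩
  have hrange : (K.subtype.noncommCoprod L.subtype comm).range = K ⊔ L := by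
    rw [MonoidHom.noncommCoprod_range, range_subtype, range_subtype]
  exact ⟨(MulEquiv.subgroupCongr hrange.symm).trans (MonoidHom.ofInjective hf).symm⟩

theorem Subgroup.nonempty_closure_pair_mulEquiv {a b : M} (hab : Commute a b)
    (hdisj : Disjoint (zpowers a) (zpowers b)) :
    Nonempty (closure {a, b} ≃* Multiplicative (ZMod (orderOf a) × ZMod (orderOf b))) := by
  have hcomm : ∀ x ∈ zpowers a, ∀ y ∈ zpowers b, Commute x y := by
    rintro - ⟨i, rfl⟩ - ⟨j, rfl⟩
    exact hab.zpow_zpow i j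
  obtain ⟨eab⟩ := nonempty_sup_mulEquiv_prod hcomm hdisj
  obtain ⟨ea⟩ := nonempty_zpowers_mulEquiv_zmod a
  obtain ⟨eb⟩ := nonempty_zpowers_mulEquiv_zmod b
  rw [closure_pair_eq_sup]
  exact ⟨(eab.trans (ea.prodCongr eb)).trans (MulEquiv.prodMultiplicative _ _).symm⟩

theorem MonoidHom.disjoint_zpowers_ker (f : M →* N) {g : M} (hg : orderOf (f g) = orderOf g) :
    Disjoint (zpowers g) f.ker := by
  rw [disjoint_iff_inf_le]
  rintro - ⟨⟨k, rfl⟩, hk : f (g ^ k) = 1⟩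
  rw [map_zpow, ← orderOf_dvd_iff_zpow_eq_one, hg,
    orderOf_dvd_iff_zpow_eq_one] at hk
  exact (mem_bot).2 hk

theorem MonoidHom.comap_zpowers_eq_closure_pair (f : M →* N) {c : M} (hc : f.ker = zpowers c)
    (g : M) : comap f (zpowers (f g)) = closure {g, c} := by
  rw [← map_zpowers, comap_map_eq, hc, closure_pair_eq_sup]

theorem MonoidHom.nonempty_comap_zpowers_mulEquiv (f : M →* N) {c : M} (hc : f.ker = zpowers c)
    {g : M} (hgc : Commute g c) (hg : orderOf (f g) = orderOf g) :
    Nonempty (comap f (zpowers (f g)) ≃*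
      Multiplicative (ZMod (orderOf g) × ZMod (orderOf c))) := by
  rw [f.comap_zpowers_eq_closure_pair hc]
  exact nonempty_closure_pair_mulEquiv hgc (hc ▸ f.disjoint_zpowers_ker hg)

end CyclicSubgroups

lemma τ_pow_zz (n : ℕ) : (τ ^ n) Hei.zz = Hei.zz := by
  induction n with
  | zero => rfl
  | succ n ih => rw [pow_succ', MulAut.mul_apply, ih]; rfl

lemma commute_zG (g : G) : Commute g zG := by
  refine SemidirectProduct.ext ?_ (by simp [zG])
  show g.left * (τ ^ _) Hei.zz = Hei.zz * (τ ^ 0) g.left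
  rw [τ_pow_zz, pow_zero]
  ext <;> simp [Hei.zz, add_comm]

lemma zG_zpow (k : ℤ) : zG ^ k = inl ⟨0, k, 0⟩ := by
  induction k using Int.induction_on with
  | zero => rfl
  | succ k ih =>
    rw [zpow_add_one, ih, zG, ← map_mul]
    rfl
  | pred k ih =>
    rw [zpow_sub_one, ih, zG, ← map_inv, ← map_mul]
    congr 1
    ext <;> simp [Hei.zz, sub_eq_add_neg]

lemma orderOf_zG : orderOf zG = 0 := by
  rw [orderOf_eq_zero_iff, ← injective_zpow_iff_not_isOfFinOrder]
  intro i j hij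
  simpa [zG_zpow] using congrArg (fun g : G => g.left.y) hij

lemma ker_p : p.ker = zpowers zG := by
  refine le_antisymm (fun g hg => ?_) (zpowers_le.2 rfl)
  have hleft : pH g.left = 1 := congrArg SemidirectProduct.left hg
  have hright : g.right = 1 := congrArg SemidirectProduct.right hg
  simp only [pH, MonoidHom.coe_mk, OneHom.coe_mk, ofAdd_eq_one, Prod.mk_eq_zero] at hleft
  exact ⟨g.left.y, show zG ^ g.left.y = g by rw [zG_zpow]; ext <;> simp [hleft, hright]⟩

lemma orderOf_tG : orderOf tG = 4 := by
  rw [tG, orderOf_injective inr inr_injective, orderOf_ofAdd_eq_addOrderOf, ZMod.addOrderOf_one]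

lemma orderOf_p_tG : orderOf (p tG) = 4 := by
  rw [show p tG = inr (Multiplicative.ofAdd 1) from rfl, orderOf_injective inr inr_injective,
    orderOf_ofAdd_eq_addOrderOf, ZMod.addOrderOf_one]

lemma uG_mul_tG_pow_four : (uG * tG) ^ 4 = zG := rfl

lemma orderOf_uG_mul_tG : orderOf (uG * tG) = 0 :=
  orderOf_eq_zero_iff.2 fun h => orderOf_eq_zero_iff.1 orderOf_zG (uG_mul_tG_pow_four ▸ h.pow)

lemma uG_mul_tG_sq_sq : (uG * tG ^ 2) ^ 2 = 1 := rfl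

lemma p_uG_mul_tG_sq_ne_one : p (uG * tG ^ 2) ≠ 1 := fun h =>
  absurd (congrArg SemidirectProduct.right h) (by decide)

lemma orderOf_uG_mul_tG_sq : orderOf (uG * tG ^ 2) = 2 :=
  orderOf_eq_prime uG_mul_tG_sq_sq fun h => p_uG_mul_tG_sq_ne_one (by rw [h, map_one])

lemma orderOf_p_uG_mul_tG_sq : orderOf (p (uG * tG ^ 2)) = 2 :=
  orderOf_eq_prime (by rw [← map_pow, uG_mul_tG_sq_sq, map_one]) p_uG_mul_tG_sq_ne_one

/-- For the projection `p : G = Hei ⋊ ℤ/4 → Q = ℤ² ⋊ ℤ/4`, the preimages of the maximal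
finite subgroups are `p⁻¹(⟨t⟩) = ⟨t,z⟩ ≅ ℤ/4 × ℤ`, `p⁻¹(⟨e₁t⟩) = ⟨ut⟩ ≅ ℤ` and
`p⁻¹(⟨e₁t²⟩) = ⟨ut²,z⟩ ≅ ℤ/2 × ℤ`. -/
theorem stmt_10 :
    (Subgroup.comap p (Subgroup.zpowers tQ) = Subgroup.closure {tG, zG} ∧
      Nonempty ((Subgroup.comap p (Subgroup.zpowers tQ)) ≃*
        Multiplicative (ZMod 4 × ℤ))) ∧
    (Subgroup.comap p (Subgroup.zpowers (ιQ (1, 0) * tQ)) = Subgroup.zpowers (uG * tG) ∧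
      Nonempty ((Subgroup.comap p (Subgroup.zpowers (ιQ (1, 0) * tQ))) ≃*
        Multiplicative ℤ)) ∧
    (Subgroup.comap p (Subgroup.zpowers (ιQ (1, 0) * tQ ^ 2)) =
        Subgroup.closure {uG * tG ^ 2, zG} ∧
      Nonempty ((Subgroup.comap p (Subgroup.zpowers (ιQ (1, 0) * tQ ^ 2))) ≃*
        Multiplicative (ZMod 2 × ℤ))) := by
  have h₂ : comap p (zpowers (p (uG * tG))) = zpowers (uG * tG) := by
    rw [p.comap_zpowers_eq_closure_pair ker_p, ← uG_mul_tG_pow_four, closure_pair_pow_eq_zpowers]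
  have e₁ := p.nonempty_comap_zpowers_mulEquiv ker_p (commute_zG tG)
    (orderOf_p_tG.trans orderOf_tG.symm)
  have e₃ := p.nonempty_comap_zpowers_mulEquiv ker_p (commute_zG (uG * tG ^ 2))
    (orderOf_p_uG_mul_tG_sq.trans orderOf_uG_mul_tG_sq.symm)
  have e₂ := nonempty_zpowers_mulEquiv_zmod (uG * tG)
  rw [orderOf_tG, orderOf_zG] at e₁
  rw [orderOf_uG_mul_tG_sq, orderOf_zG] at e₃
  rw [orderOf_uG_mul_tG, ← h₂] at e₂
  -- `ZMod 0` is `ℤ` by definition.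
  exact ⟨⟨p.comap_zpowers_eq_closure_pair ker_p tG, e₁⟩, ⟨h₂, e₂⟩,
    ⟨p.comap_zpowers_eq_closure_pair ker_p (uG * tG ^ 2), e₃⟩⟩
end

section
/- Every virtually cyclic subgroup of Q = ℤ² ⋊ ℤ/4 is finite, infinite cyclic, or isomorphic to the infinite dihedral group D∞. More generally, if Q is a group in which every nontrivial finite subgroup F is contained in a unique maximal finite subgroup M satisfying N_Q(M) = M, then every virtually cyclic subgroup of Q is finite, infinite cyclic, or infinite dihedral. -/
open SemidirectProduct

/-- A group is virtually cyclic if it has a cyclic subgroup of finite index. -/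
def VirtuallyCyclic (V : Type*) [Group V] : Prop :=
  ∃ H : Subgroup V, IsCyclic H ∧ H.index ≠ 0

/-!
Say that `G` has torsion centralizers if whatever commutes with a nontrivial element of finite
order has finite order itself. `Q` is such a group: `ℤ²` is torsion-free, a nontrivial rotation
fixes no nonzero vector, and every element outside `ℤ²` satisfies `g ^ 4 = 1`. So is every group
with (M) and (NM): if `g` commutes with `f ≠ 1` of finite order, conjugation by `g` fixes `⟨f⟩`,
hence the unique maximal finite subgroup `M ⊇ ⟨f⟩`, so `g ∈ N(M) = M`.

Let `G` be infinite, virtually cyclic, with torsion centralizers, and `⟨y⟩` a normal infinite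
cyclic subgroup of finite index. Its centralizer `C` is torsion-free and has `⟨y⟩` central of
finite index; the transfer `C → Z(C)` is then injective, so `C` is abelian, and
`c ↦ c ^ [C : ⟨y⟩]` embeds `C` into `⟨y⟩`, so `C = ⟨z⟩` is cyclic. Every element conjugates `y`
to `y` or `y⁻¹`. If all of them fix `y`, then `G = C`. Otherwise any `t ∉ C` inverts `y` and
`z`; then `t² ∈ C` commutes with `t`, so `t² = 1`, and `G = C ∪ tC` is infinite dihedral.
-/

open Subgroup

def HasTorsionCentralizers (G : Type*) [Group G] : Prop :=
  ∀ f g : G, f ≠ 1 → IsOfFinOrder f → Commute f g → IsOfFinOrder g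

section General

variable {G : Type*} [Group G]

theorem HasTorsionCentralizers.subgroup (h : HasTorsionCentralizers G) (H : Subgroup G) :
    HasTorsionCentralizers H := fun f g hf hford hcomm =>
  Submonoid.isOfFinOrder_coe.1 <|
    h f g (by simpa using hf) (Submonoid.isOfFinOrder_coe.2 hford) (hcomm.map H.subtype)

theorem conj_eq_or_eq_inv_of_normal_zpowers {y : G} (hy : ¬IsOfFinOrder y)
    [(zpowers y).Normal] (g : G) : g * y * g⁻¹ = y ∨ g * y * g⁻¹ = y⁻¹ := by
  have h := Normal.map_conj_eq (H := zpowers y) g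
  rw [MonoidHom.map_zpowers] at h
  change zpowers (g * y * g⁻¹) = zpowers y at h
  rcases (zpowers_eq_zpowers_iff hy).1 h.symm with h | h
  · exact Or.inl h.symm
  · exact Or.inr h.symm

theorem mem_centralizer_zpowers_iff {y g : G} :
    g ∈ centralizer (zpowers y : Set G) ↔ g * y * g⁻¹ = y := by
  rw [zpowers_eq_closure, centralizer_closure, mem_centralizer_singleton_iff,
    mul_inv_eq_iff_eq_mul]

-- The transfer `g ↦ g ^ [G : Z(G)]` is a homomorphism into the abelian group `Z(G)`, with
-- torsion kernel.
theorem commute_of_finiteIndex_center [(center G).FiniteIndex]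
    (htf : ∀ g : G, IsOfFinOrder g → g = 1) (a b : G) : Commute a b := by
  have hinj : Function.Injective (MonoidHom.transferCenterPow G) := by
    refine (injective_iff_map_eq_one _).2 fun g hg => htf g ?_
    refine isOfFinOrder_iff_pow_eq_one.2
      ⟨(center G).index, Nat.pos_of_ne_zero FiniteIndex.index_ne_zero, ?_⟩
    simpa using congrArg Subtype.val hg
  exact hinj <| by
    rw [map_mul, map_mul]
    exact Subtype.ext (mem_center_iff.1 (MonoidHom.transferCenterPow G b).2 _)

theorem isCyclic_of_cyclic_le_center (htf : ∀ g : G, IsOfFinOrder g → g = 1)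
    {K : Subgroup G} [IsCyclic K] [K.FiniteIndex] (hK : K ≤ center G) : IsCyclic G := by
  have : (center G).FiniteIndex := finiteIndex_of_le hK
  have hcomm := commute_of_finiteIndex_center htf
  have : K.Normal := ⟨fun n hn g => by rwa [(hcomm g n).eq, mul_inv_cancel_right]⟩
  let pow : G →* K := MonoidHom.mk' (fun g => ⟨g ^ K.index, pow_index_mem K g⟩)
    fun a b => Subtype.ext ((hcomm a b).mul_pow _)
  refine isCyclic_of_injective pow <| (injective_iff_map_eq_one _).2 fun g hg => htf g ?_
  exact isOfFinOrder_iff_pow_eq_one.2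
    ⟨K.index, Nat.pos_of_ne_zero FiniteIndex.index_ne_zero, congrArg Subtype.val hg⟩

theorem VirtuallyCyclic.exists_normal_zpowers [Infinite G] (hG : VirtuallyCyclic G) :
    ∃ y : G, ¬IsOfFinOrder y ∧ (zpowers y).Normal ∧ (zpowers y).FiniteIndex := by
  obtain ⟨H, hHc, hHi⟩ := hG
  have : H.FiniteIndex := ⟨hHi⟩
  have : IsCyclic H.normalCore := isCyclic_of_le H.normalCore_le
  obtain ⟨y, hy⟩ := (Subgroup.isCyclic_iff_exists_zpowers_eq_top _).1 this
  have : (zpowers y).FiniteIndex := hy ▸ finiteIndex_normalCore H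
  refine ⟨y, fun hfin => ?_, hy ▸ normalCore_normal H, this⟩
  have : Finite (zpowers y) := hfin.finite_zpowers.to_subtype
  have := (finite_iff_finite_and_finiteIndex (zpowers y)).2 ⟨this, ‹_›⟩
  exact not_finite G

theorem HasTorsionCentralizers.isCyclic_centralizer (hB : HasTorsionCentralizers G) {y : G}
    (hy : ¬IsOfFinOrder y) [(zpowers y).FiniteIndex] :
    IsCyclic (centralizer (zpowers y : Set G)) := by
  set C := centralizer (zpowers y : Set G)
  have : IsCyclic ((zpowers y).subgroupOf C) :=
    isCyclic_of_injective (subgroupOfEquivOfLe (le_centralizer (zpowers y))).toMonoidHom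
      (subgroupOfEquivOfLe _).injective
  refine isCyclic_of_cyclic_le_center (K := (zpowers y).subgroupOf C) ?_ ?_
  · intro c hc
    by_contra hne
    refine hy (hB c y (by simpa using hne) (Submonoid.isOfFinOrder_coe.2 hc) ?_)
    exact (mem_centralizer_iff.1 c.2 y (mem_zpowers y)).symm
  · intro x hx
    exact mem_center_iff.2 fun g => Subtype.ext (mem_centralizer_iff.1 g.2 x hx).symm

-- `ZMod 0` is `ℤ` by definition, but `zpow` does not see through it.
def ZMod.zeroAddEquivInt : ZMod 0 ≃+ ℤ := AddEquiv.refl ℤ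

theorem zpow_mul_eq_mul_zpow_neg {z t : G} (htz : t * z * t⁻¹ = z⁻¹) (k : ℤ) :
    z ^ k * t = t * z ^ (-k) := by
  have h : t * z ^ (-k) * t⁻¹ = z ^ k := by
    rw [← conj_zpow, htz, inv_zpow', neg_neg]
  rw [← h, inv_mul_cancel_right]

theorem nonempty_mulEquiv_dihedralGroup_zero {z t : G} (hz : ¬IsOfFinOrder z) (ht : t * t = 1)
    (htz : t * z * t⁻¹ = z⁻¹) (hgen : ∀ g : G, ∃ k : ℤ, g = z ^ k ∨ g = t * z ^ k) :
    Nonempty (G ≃* DihedralGroup 0) := by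
  have hzinj : Function.Injective (z ^ · : ℤ → G) := injective_zpow_iff_not_isOfFinOrder.2 hz
  have hswap := zpow_mul_eq_mul_zpow_neg htz
  let e := ZMod.zeroAddEquivInt
  let f : DihedralGroup 0 → G
    | .r i => z ^ e i
    | .sr i => t * z ^ e i
  have hf : ∀ a b, f (a * b) = f a * f b := by
    rintro (i | i) (j | j)
    · exact (congrArg _ (map_add e i j)).trans (zpow_add z _ _)
    · show t * z ^ e (j - i) = z ^ e i * (t * z ^ e j)
      rw [← mul_assoc, hswap, mul_assoc, ← zpow_add, neg_add_eq_sub, map_sub]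
    · show t * z ^ e (i + j) = t * z ^ e i * z ^ e j
      rw [map_add, zpow_add, mul_assoc]
    · show z ^ e (j - i) = t * z ^ e i * (t * z ^ e j)
      rw [← mul_assoc, mul_assoc t, hswap, ← mul_assoc, ht, one_mul, ← zpow_add, neg_add_eq_sub,
        map_sub]
  have ht_ne : ∀ k : ℤ, t ≠ z ^ k := by
    rintro k rfl
    rw [(Commute.zpow_self z k).eq, mul_inv_cancel_right] at htz
    exact hz (isOfFinOrder_iff_pow_eq_one.2
      ⟨2, two_pos, by rw [pow_two, mul_eq_one_iff_eq_inv.2 htz]⟩)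
  refine ⟨(MulEquiv.ofBijective (MonoidHom.mk' f hf) ⟨?_, ?_⟩).symm⟩
  · rintro (i | i) (j | j) h
    · exact congrArg _ (e.injective (hzinj h))
    · have h' : z ^ e i = t * z ^ e j := h
      exact absurd (by rw [zpow_sub, h', mul_inv_cancel_right]) (ht_ne (e i - e j))
    · have h' : t * z ^ e i = z ^ e j := h
      exact absurd (by rw [zpow_sub, ← h', mul_inv_cancel_right]) (ht_ne (e j - e i))
    · exact congrArg _ (e.injective (hzinj (mul_left_cancel h)))
  · intro g
    obtain ⟨k, rfl | rfl⟩ := hgen g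
    · exact ⟨.r (e.symm k), show z ^ e (e.symm k) = _ by rw [e.apply_symm_apply]⟩
    · exact ⟨.sr (e.symm k), show t * z ^ e (e.symm k) = _ by rw [e.apply_symm_apply]⟩

theorem nonempty_mulEquiv_dihedralGroup_of_centralizer {y z t : G} (hy : ¬IsOfFinOrder y)
    [(zpowers y).Normal] (hz : zpowers z = centralizer (zpowers y : Set G))
    (ht : t * y * t⁻¹ ≠ y) : Nonempty (G ≃* DihedralGroup 0) := by
  have hmem (g : G) : g ∈ zpowers z ↔ g * y * g⁻¹ = y := by
    rw [hz, mem_centralizer_zpowers_iff]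
  have hty : t * y * t⁻¹ = y⁻¹ := (conj_eq_or_eq_inv_of_normal_zpowers hy t).resolve_left ht
  have hty' : t * y⁻¹ * t⁻¹ = y := by rw [← conj_inv, hty, inv_inv]
  obtain ⟨k, hk⟩ := mem_zpowers_iff.1 ((hmem y).2 (mul_inv_cancel_right y y))
  have hz_inf : ¬IsOfFinOrder z := fun h => hy (hk ▸ h.zpow)
  have : (zpowers z).Normal := hz ▸ normal_centralizer
  have htz : t * z * t⁻¹ = z⁻¹ := by
    refine (conj_eq_or_eq_inv_of_normal_zpowers hz_inf t).resolve_left fun h => ht ?_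
    rw [← hk, ← conj_zpow, h]
  have htt : t * t = 1 := by
    obtain ⟨b, hb⟩ := mem_zpowers_iff.1 <| (hmem (t * t)).2 <|
      calc t * t * y * (t * t)⁻¹ = t * (t * y * t⁻¹) * t⁻¹ := by group
        _ = y := by rw [hty, hty']
    have : z ^ (-b) = z ^ b := by
      rw [← inv_zpow', ← htz, conj_zpow, hb]
      group
    have hb0 : b = 0 := by
      have := injective_zpow_iff_not_isOfFinOrder.2 hz_inf this
      omega
    rw [← hb, hb0, zpow_zero]
  refine nonempty_mulEquiv_dihedralGroup_zero hz_inf htt htz fun g => ?_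
  rcases conj_eq_or_eq_inv_of_normal_zpowers hy g with hg | hg
  · obtain ⟨k, hk⟩ := mem_zpowers_iff.1 ((hmem g).2 hg)
    exact ⟨k, Or.inl hk.symm⟩
  · obtain ⟨k, hk⟩ := mem_zpowers_iff.1 <| (hmem (t * g)).2 <|
      calc t * g * y * (t * g)⁻¹ = t * (g * y * g⁻¹) * t⁻¹ := by group
        _ = y := by rw [hg, hty']
    exact ⟨k, Or.inr (by rw [hk, ← mul_assoc, htt, one_mul])⟩

theorem HasTorsionCentralizers.finite_or_cyclic_or_dihedral (hB : HasTorsionCentralizers G)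
    (hG : VirtuallyCyclic G) :
    Finite G ∨ (Infinite G ∧ IsCyclic G) ∨ Nonempty (G ≃* DihedralGroup 0) := by
  rcases finite_or_infinite G with hfin | hinf
  · exact Or.inl hfin
  obtain ⟨y, hy, _, _⟩ := hG.exists_normal_zpowers
  obtain ⟨z, hz⟩ :=
    (Subgroup.isCyclic_iff_exists_zpowers_eq_top _).1 (hB.isCyclic_centralizer hy)
  by_cases hC : ∀ g : G, g * y * g⁻¹ = y
  · refine Or.inr (Or.inl ⟨hinf, isCyclic_iff_exists_zpowers_eq_top.2 ⟨z, ?_⟩⟩)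
    exact (eq_top_iff' _).2 fun g => hz ▸ mem_centralizer_zpowers_iff.2 (hC g)
  · obtain ⟨t, ht⟩ := not_forall.1 hC
    exact Or.inr (Or.inr (nonempty_mulEquiv_dihedralGroup_of_centralizer hy hz ht))

end General

theorem IsMaximalFinite.map_equiv {Γ Γ' : Type*} [Group Γ] [Group Γ'] {M : Subgroup Γ}
    (hM : IsMaximalFinite M) (e : Γ ≃* Γ') : IsMaximalFinite (M.map (e : Γ →* Γ')) := by
  have := hM.1
  refine ⟨Finite.of_equiv _ (M.equivMapOfInjective _ e.injective).toEquiv, fun K hK hle => ?_⟩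
  have hKfin : Finite (K.map (e.symm : Γ' →* Γ)) :=
    Finite.of_equiv _ (K.equivMapOfInjective _ e.symm.injective).toEquiv
  have hMK : M = K.map (e.symm : Γ' →* Γ) :=
    hM.2 _ hKfin fun m hm => ⟨e m, hle (mem_map_of_mem _ hm), e.symm_apply_apply m⟩
  exact le_antisymm hle fun k hk => ⟨e.symm k, hMK ▸ mem_map_of_mem _ hk, e.apply_symm_apply k⟩

theorem HasTorsionCentralizers.of_isMaximalFinite {Γ : Type*} [Group Γ]
    (hM : ∀ F : Subgroup Γ, F ≠ ⊥ → Finite F → ∃! M : Subgroup Γ, IsMaximalFinite M ∧ F ≤ M)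
    (hNM : ∀ M : Subgroup Γ, IsMaximalFinite M → normalizer (M : Set Γ) = M) :
    HasTorsionCentralizers Γ := by
  intro f g hf hford hcomm
  obtain ⟨M, ⟨hMmax, hfM⟩, huniq⟩ :=
    hM (zpowers f) (zpowers_ne_bot.2 hf) hford.finite_zpowers.to_subtype
  have hfix : (zpowers f).map (MulAut.conj g) = zpowers f := by
    rw [MonoidHom.map_zpowers]
    exact congrArg zpowers (mul_inv_eq_of_eq_mul hcomm.symm.eq)
  have hgM : M.map (MulAut.conj g) = M := huniq _ ⟨hMmax.map_equiv _, hfix ▸ map_mono hfM⟩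
  have hg : g ∈ M := hNM M hMmax ▸ mem_normalizer_iff_map_conj_eq.2 hgM
  have := hMmax.1
  exact Submonoid.isOfFinOrder_coe.2 (isOfFinOrder_of_finite (⟨g, hg⟩ : M))

section Q

open SemidirectProduct

theorem toAdd_Jm (x : Z2) : Multiplicative.toAdd (Jm x) =
    (-(Multiplicative.toAdd x).2, (Multiplicative.toAdd x).1) := rfl

theorem eq_one_of_Jm_pow_apply_eq_self {k : ℕ} (hk0 : k ≠ 0) (hk4 : k < 4) {x : Z2}
    (h : (Jm ^ k) x = x) : x = 1 := by
  rw [← toAdd_eq_zero, Prod.ext_iff]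
  have h := congrArg Multiplicative.toAdd h
  interval_cases k <;>
    simp only [pow_succ, pow_zero, one_mul, MulAut.mul_apply, toAdd_Jm, Prod.ext_iff,
      Prod.fst_zero, Prod.snd_zero] at h ⊢ <;> omega

theorem eq_one_of_phiQ_apply_eq_self {u : Multiplicative (ZMod 4)} (hu : u ≠ 1) {x : Z2}
    (h : phiQ u x = x) : x = 1 :=
  eq_one_of_Jm_pow_apply_eq_self (by simpa [ZMod.val_eq_zero] using hu) (ZMod.val_lt _) h

-- `(g ^ 4).left = x · σx · σ²x · σ³x` for `σ = phiQ g.right` is fixed by `σ`, as `σ ^ 4 = 1`.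
theorem Q_pow_four_eq_one {g : Q} (hg : g.right ≠ 1) : g ^ 4 = 1 := by
  have hu : g.right ^ 4 = 1 := (by decide : ∀ u : Multiplicative (ZMod 4), u ^ 4 = 1) _
  have hσ (x : Z2) : phiQ g.right (phiQ g.right (phiQ g.right (phiQ g.right x))) = x := by
    simpa [pow_succ] using
      DFunLike.congr_fun (by rw [← map_pow, hu, map_one] : phiQ g.right ^ 4 = 1) x
  refine SemidirectProduct.ext ?_ ((map_pow rightHom g 4).trans hu)
  refine eq_one_of_phiQ_apply_eq_self hg ?_
  simp only [pow_succ, pow_zero, one_mul, mul_left, mul_right, map_mul, MulAut.mul_apply, hσ]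
  ac_rfl

theorem hasTorsionCentralizers_Q : HasTorsionCentralizers Q := by
  intro f g hf hford hcomm
  by_cases hfr : f.right = 1
  · have hfl : f = inl f.left := SemidirectProduct.ext rfl hfr
    rw [hfl, inl_injective.isOfFinOrder_iff, isOfFinOrder_iff_eq_one] at hford
    exact absurd (by rw [hfl, hford, map_one]) hf
  by_cases hgr : g.right = 1
  · have hgl : g = inl g.left := SemidirectProduct.ext rfl hgr
    have hfix : phiQ f.right g.left = g.left := by
      have h := congrArg SemidirectProduct.left hcomm.eq
      rw [hgl] at h
      simpa [mul_comm] using h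
    rw [hgl, eq_one_of_phiQ_apply_eq_self hfr hfix, map_one]
    exact IsOfFinOrder.one
  exact isOfFinOrder_iff_pow_eq_one.2 ⟨4, by norm_num, Q_pow_four_eq_one hgr⟩

end Q

/-- Every virtually cyclic subgroup of `Q = ℤ² ⋊ ℤ/4` is finite, infinite cyclic or
infinite dihedral.  More generally, this holds in any group satisfying: (M) every nontrivial
finite subgroup is contained in a unique maximal finite subgroup, and (NM) every maximal
finite subgroup is self-normalizing. -/
theorem stmt_13 :
    (∀ V : Subgroup Q, VirtuallyCyclic V →
      Finite V ∨ (Infinite V ∧ IsCyclic V) ∨ Nonempty (V ≃* DihedralGroup 0)) ∧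
    (∀ (Γ : Type) [Group Γ],
      (∀ F : Subgroup Γ, F ≠ ⊥ → Finite F →
        ∃! M : Subgroup Γ, IsMaximalFinite M ∧ F ≤ M) →
      (∀ M : Subgroup Γ, IsMaximalFinite M → Subgroup.normalizer (M : Set Γ) = M) →
      ∀ V : Subgroup Γ, VirtuallyCyclic V →
        Finite V ∨ (Infinite V ∧ IsCyclic V) ∨ Nonempty (V ≃* DihedralGroup 0)) :=
  ⟨fun V => (hasTorsionCentralizers_Q.subgroup V).finite_or_cyclic_or_dihedral,
    fun _ _ hM hNM V =>
      ((HasTorsionCentralizers.of_isMaximalFinite hM hNM).subgroup V).finite_or_cyclic_or_dihedral⟩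
end

section
/- For a virtually cyclic group V, the following are equivalent: (i) V admits a surjective homomorphism onto ℤ with finite kernel; (ii) the abelianization H₁(V;ℤ) is infinite; (iii) the center of V is infinite. Moreover, an infinite virtually cyclic group not satisfying these conditions admits a surjection onto the infinite dihedral group D∞ with finite kernel. -/
open Subgroup

theorem not_isOfFinOrder_zpow {G : Type*} [Group G] {c : G} (hc : ¬IsOfFinOrder c) {j : ℤ}
    (hj : j ≠ 0) : ¬IsOfFinOrder (c ^ j) := by
  rw [isOfFinOrder_iff_zpow_eq_one]
  rintro ⟨n, hn, hcn⟩
  rw [← zpow_mul, ← zpow_zero c] at hcn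
  exact mul_ne_zero hj hn (injective_zpow_iff_not_isOfFinOrder.2 hc hcn)

theorem Subgroup.infinite_of_not_isOfFinOrder {G : Type*} [Group G] {K : Subgroup G} {x : G}
    (hxK : x ∈ K) (hx : ¬IsOfFinOrder x) : Infinite K :=
  ((infinite_zpowers.2 hx).mono (zpowers_le.2 hxK)).to_subtype

theorem infinite_abelianization_of_surjective {V A : Type*} [Group V] [CommGroup A] [Infinite A]
    {f : V →* A} (hf : Function.Surjective f) : Infinite (Abelianization V) :=
  .of_surjective (Abelianization.lift f) fun z => by
    obtain ⟨v, rfl⟩ := hf z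
    exact ⟨.of v, Abelianization.lift_apply_of f v⟩

theorem infinite_center_of_surjective_int {V : Type*} [Group V] {f : V →* Multiplicative ℤ}
    (hf : Function.Surjective f) [Finite f.ker] : Infinite (center V) := by
  obtain ⟨v, hv⟩ := hf (Multiplicative.ofAdd 1)
  obtain ⟨k, hk, hvk⟩ :=
    (isOfFinOrder_of_finite (MulAut.conjNormal (H := f.ker) v)).exists_pow_eq_one
  rw [← map_pow] at hvk
  have hcomm_ker : ∀ a ∈ f.ker, Commute (v ^ k) a := fun a ha =>
    mul_inv_eq_iff_eq_mul.1 <| by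
      simpa [-map_pow] using congrArg (fun φ : MulAut f.ker => ((φ ⟨a, ha⟩ : f.ker) : V)) hvk
  have hcentral : v ^ k ∈ center V := by
    refine mem_center_iff.2 fun x => (Commute.eq ?_).symm
    have hx : x * v ^ (-(f x).toAdd) ∈ f.ker := by
      simp [hv, ← ofAdd_zsmul]
    rw [show x = x * v ^ (-(f x).toAdd) * v ^ (f x).toAdd by group]
    exact (hcomm_ker _ hx).mul_right (((Commute.refl v).pow_left _).zpow_right _)
  refine infinite_of_not_isOfFinOrder hcentral fun hfin => ?_
  have := f.isOfFinOrder hfin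
  rw [map_pow, hv, isOfFinOrder_iff_eq_one, pow_eq_one_iff] at this
  simp only [ofAdd_eq_one, one_ne_zero, false_or] at this
  exact hk.ne' this

section ConjUnit

variable {V : Type*} [Group V] {c : V} (hc : ¬IsOfFinOrder c) [(zpowers c).Normal]
include hc

theorem exists_conj_eq_zpow_unit (v : V) : ∃ u : ℤˣ, v * c * v⁻¹ = c ^ (u : ℤ) := by
  obtain ⟨k, hk⟩ := mem_zpowers_iff.1 (Normal.conj_mem ‹_› c (mem_zpowers c) v)
  obtain ⟨m, hm⟩ := mem_zpowers_iff.1 (Normal.conj_mem ‹_› c (mem_zpowers c) v⁻¹)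
  have hkm : k * m = 1 := injective_zpow_iff_not_isOfFinOrder.2 hc <| by
    dsimp only
    rw [zpow_mul, hk, conj_zpow, hm, zpow_one]
    group
  exact ⟨Units.mkOfMulEqOne k m hkm, hk.symm⟩

noncomputable def conjUnit : V →* ℤˣ where
  toFun v := (exists_conj_eq_zpow_unit hc v).choose
  map_one' := Units.ext <| injective_zpow_iff_not_isOfFinOrder.2 hc <| by
    dsimp only
    rw [← (exists_conj_eq_zpow_unit hc 1).choose_spec, Units.val_one, zpow_one]
    group
  map_mul' x y := Units.ext <| injective_zpow_iff_not_isOfFinOrder.2 hc <| by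
    dsimp only
    rw [Units.val_mul, zpow_mul, ← (exists_conj_eq_zpow_unit hc x).choose_spec, conj_zpow,
      ← (exists_conj_eq_zpow_unit hc y).choose_spec, ← (exists_conj_eq_zpow_unit hc _).choose_spec]
    group

theorem conj_eq_zpow_conjUnit (v : V) : v * c * v⁻¹ = c ^ (conjUnit hc v : ℤ) :=
  (exists_conj_eq_zpow_unit hc v).choose_spec

theorem conjUnit_eq_one_iff {v : V} : conjUnit hc v = 1 ↔ Commute v c := by
  rw [← Units.val_eq_one, ← (injective_zpow_iff_not_isOfFinOrder.2 hc).eq_iff]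
  simp only [zpow_one, ← conj_eq_zpow_conjUnit hc, mul_inv_eq_iff_eq_mul]
  rfl

end ConjUnit

section Dihedral

open DihedralGroup

variable {V : Type*} [Group V] (ε : V →* ℤˣ)

def dihedralHom (δ : V → ℤ) (hδ : ∀ x y, δ (x * y) = ε y * δ x + δ y) :
    V →* DihedralGroup 0 where
  -- `ZMod 0` is `ℤ` only up to unfolding: the casts let the simp lemmas about `ZMod` apply
  toFun v := if ε v = 1 then r (Int.cast (δ v)) else sr (Int.cast (δ v))
  map_one' := by
    have : δ 1 = 0 := by simpa using hδ 1 1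
    simp [this]
  map_mul' x y := by
    rcases Int.units_eq_one_or (ε x) with hx | hx <;>
    rcases Int.units_eq_one_or (ε y) with hy | hy <;>
    simp [hx, hy, hδ, r_mul_r, r_mul_sr, sr_mul_r, sr_mul_sr] <;> ring

theorem dihedralHom_eq_one_iff {δ : V → ℤ} (hδ : ∀ x y, δ (x * y) = ε y * δ x + δ y) (v : V) :
    dihedralHom ε δ hδ v = 1 ↔ ε v = 1 ∧ δ v = 0 := by
  by_cases hv : ε v = 1 <;> simp [dihedralHom, hv, one_def, -r_zero]

theorem exists_crossedHom_of_conj {t : V} (ht : ε t = -1) (π : ε.ker →* Multiplicative ℤ)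
    (hconj : ∀ w, π (MulAut.conjNormal t w) = (π w)⁻¹) :
    ∃ δ : V → ℤ, (∀ x y, δ (x * y) = ε y * δ x + δ y) ∧
      ∀ w : ε.ker, δ w = (π w).toAdd ∧ δ (t⁻¹ * w) = (π w).toAdd := by
  let π' : V → ℤ := fun v => if hv : ε v = 1 then (π ⟨v, hv⟩).toAdd else 0
  have hπ' : ∀ v (hv : ε v = 1), π' v = (π ⟨v, hv⟩).toAdd := fun v hv => dif_pos hv
  have hπ'_mul : ∀ a b, ε a = 1 → ε b = 1 → π' (a * b) = π' a + π' b := fun a b ha hb => by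
    rw [hπ' _ (by simp [ha, hb]), hπ' _ ha, hπ' _ hb, ← toAdd_mul]
    exact congrArg _ (map_mul π ⟨a, ha⟩ ⟨b, hb⟩)
  have hπ'_conj : ∀ a, ε a = 1 → π' (t * a * t⁻¹) = -π' a := fun a ha => by
    rw [hπ' _ (by simp [ha]), hπ' _ ha, ← toAdd_inv, ← hconj]
    rfl
  have hπ't : π' (t⁻¹ * t⁻¹) = 0 := by
    have := hπ'_conj (t⁻¹ * t⁻¹) (by simp [ht])
    rw [show t * (t⁻¹ * t⁻¹) * t⁻¹ = t⁻¹ * t⁻¹ by group] at this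
    omega
  refine ⟨fun v => if ε v = 1 then π' v else π' (t * v), fun x y => ?_, fun w => ?_⟩
  · rcases Int.units_eq_one_or (ε x) with hx | hx <;>
    rcases Int.units_eq_one_or (ε y) with hy | hy <;>
    simp only [map_mul, hx, hy] <;> norm_num
    · exact hπ'_mul x y hx hy
    · rw [show t * (x * y) = t * x * t⁻¹ * (t * y) by group,
        hπ'_mul _ _ (by simp [hx]) (by simp [ht, hy]), hπ'_conj x hx]
    · rw [← mul_assoc, hπ'_mul _ _ (by simp [ht, hx]) hy]
    · rw [show x * y = t⁻¹ * t⁻¹ * (t * (t * x) * t⁻¹) * (t * y) by group,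
        hπ'_mul _ _ (by simp [ht, hx]) (by simp [ht, hy]),
        hπ'_mul _ _ (by simp [ht]) (by simp [ht, hx]), hπ't, hπ'_conj _ (by simp [ht, hx]),
        zero_add]
  · have hw : ε w = 1 := w.2
    simp [π', ht, hw]

theorem exists_surjective_dihedral_of_conj {t : V} (ht : ε t = -1)
    (π : ε.ker →* Multiplicative ℤ) (hπ : Function.Surjective π) [Finite π.ker]
    (hconj : ∀ w, π (MulAut.conjNormal t w) = (π w)⁻¹) :
    ∃ f : V →* DihedralGroup 0, Function.Surjective f ∧ Finite f.ker := by
  obtain ⟨δ, hδ, hδπ⟩ := exists_crossedHom_of_conj ε ht π hconj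
  refine ⟨dihedralHom ε δ hδ, ?_, ?_⟩
  · rintro (i | i) <;> obtain ⟨j, rfl⟩ := ZMod.intCast_surjective i <;>
      obtain ⟨w, hw⟩ := hπ (.ofAdd j) <;> have hw1 : ε w = 1 := w.2
    · exact ⟨w, by simp [dihedralHom, hw1, (hδπ w).1, hw]⟩
    · exact ⟨t⁻¹ * w, by simp [dihedralHom, ht, hw1, (hδπ w).2, hw]⟩
  · have hsub : ((dihedralHom ε δ hδ).ker : Set V) ⊆ (↑) '' (π.ker : Set ε.ker) := by
      intro v hv
      obtain ⟨hv1, hv0⟩ := (dihedralHom_eq_one_iff ε hδ v).1 hv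
      refine ⟨⟨v, hv1⟩, ?_, rfl⟩
      simpa [(hδπ ⟨v, hv1⟩).1] using hv0
    exact ((Set.toFinite _).image _ |>.subset hsub).to_subtype

end Dihedral

namespace VirtuallyCyclic

variable {V : Type*} [Group V]

theorem of_surjective {W : Type*} [Group W] (h : VirtuallyCyclic V) {f : V →* W}
    (hf : Function.Surjective f) : VirtuallyCyclic W := by
  obtain ⟨H, hH, hidx⟩ := h
  exact ⟨H.map f, isCyclic_of_surjective _ (f.subgroupMap_surjective H),
    ne_zero_of_dvd_ne_zero hidx (H.index_map_dvd hf)⟩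

theorem subgroup (h : VirtuallyCyclic V) (K : Subgroup V) : VirtuallyCyclic K := by
  obtain ⟨H, hH, hidx⟩ := h
  have : H.FiniteIndex := ⟨hidx⟩
  refine ⟨H.subgroupOf K, isCyclic_of_injective (K.subtype.subgroupComap H) ?_,
    FiniteIndex.index_ne_zero⟩
  exact fun a b hab => Subtype.ext (Subtype.ext congr(($hab : V)))

theorem exists_zpowers_normal (h : VirtuallyCyclic V) [Infinite V] :
    ∃ c : V, ¬IsOfFinOrder c ∧ (zpowers c).Normal ∧ (zpowers c).FiniteIndex := by
  obtain ⟨H, hH, hidx⟩ := h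
  have : H.FiniteIndex := ⟨hidx⟩
  have : IsCyclic H.normalCore := isCyclic_of_injective (inclusion H.normalCore_le)
    (inclusion_injective _)
  obtain ⟨c, hc⟩ := isCyclic_iff_exists_zpowers_eq_top.1 this
  have hcN : zpowers (c : V) = H.normalCore := by
    simpa [hc, ← MonoidHom.range_eq_map] using (H.normalCore.subtype.map_zpowers c).symm
  have : Infinite H.normalCore := by
    by_contra hfin
    rw [not_infinite_iff_finite] at hfin
    have := (finite_iff_finite_and_finiteIndex H.normalCore).2 ⟨hfin, inferInstance⟩
    exact not_finite V
  refine ⟨c, ?_, by rw [hcN]; infer_instance, by rw [hcN]; infer_instance⟩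
  rw [← infinite_zpowers, hcN]
  exact Set.infinite_coe_iff.1 ‹_›

theorem exists_not_isOfFinOrder_mem (h : VirtuallyCyclic V) (K : Subgroup V) [Infinite K] :
    ∃ x ∈ K, ¬IsOfFinOrder x := by
  have : Infinite V := Infinite.of_injective _ K.subtype_injective
  obtain ⟨c, hc, -, _⟩ := h.exists_zpowers_normal
  obtain ⟨a, b, hab, hcoset⟩ :=
    Finite.exists_ne_map_eq_of_infinite fun x : K => (x : V ⧸ zpowers c)
  obtain ⟨j, hj⟩ := mem_zpowers_iff.1 (QuotientGroup.eq.1 hcoset)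
  refine ⟨_, K.mul_mem (K.inv_mem a.2) b.2, hj ▸ not_isOfFinOrder_zpow hc ?_⟩
  rintro rfl
  exact hab (Subtype.ext (inv_mul_eq_one.1 (by simpa using hj.symm)))

theorem exists_zpow_mem_zpowers (h : VirtuallyCyclic V) {x : V} (hx : ¬IsOfFinOrder x) (v : V) :
    ∃ n : ℤ, n ≠ 0 ∧ v ^ n ∈ zpowers x := by
  have : Infinite V := .of_injective _ (injective_zpow_iff_not_isOfFinOrder.2 hx)
  obtain ⟨c, hc, _, _⟩ := h.exists_zpowers_normal
  set N := (zpowers c).index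
  have hN : (N : ℤ) ≠ 0 := Nat.cast_ne_zero.2 FiniteIndex.index_ne_zero
  obtain ⟨j, hj⟩ := mem_zpowers_iff.1 ((zpowers c).pow_index_mem v)
  obtain ⟨k, hk⟩ := mem_zpowers_iff.1 ((zpowers c).pow_index_mem x)
  rw [← zpow_natCast] at hj hk
  have hk0 : k ≠ 0 := by
    rintro rfl
    exact hx (isOfFinOrder_iff_zpow_eq_one.2 ⟨_, hN, by rw [← hk, zpow_zero]⟩)
  refine ⟨N * k, mul_ne_zero hN hk0, mem_zpowers_iff.2 ⟨N * j, ?_⟩⟩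
  rw [zpow_mul, zpow_mul, ← hj, ← hk, ← zpow_mul, ← zpow_mul, mul_comm]

theorem eq_one_of_map_eq_one (h : VirtuallyCyclic V) {A : Type*} [Group A] [IsMulTorsionFree A]
    {g : V →* A} {x : V} (hx : ¬IsOfFinOrder x) (hgx : g x = 1) : g = 1 := by
  ext v
  obtain ⟨n, hn, hvn⟩ := h.exists_zpow_mem_zpowers hx v
  obtain ⟨m, hm⟩ := mem_zpowers_iff.1 hvn
  rw [MonoidHom.one_apply, ← IsMulTorsionFree.zpow_eq_one_iff_left hn, ← map_zpow, ← hm,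
    map_zpow, hgx, one_zpow]

theorem finite_ker (h : VirtuallyCyclic V) {A : Type*} [Group A] [IsMulTorsionFree A]
    {g : V →* A} (hg : g ≠ 1) : Finite g.ker := by
  by_contra hfin
  have : Infinite g.ker := not_finite_iff_infinite.1 hfin
  obtain ⟨x, hx, hxo⟩ := h.exists_not_isOfFinOrder_mem g.ker
  exact hg (h.eq_one_of_map_eq_one hxo hx)

theorem exists_surjective_int_of_ne_one (h : VirtuallyCyclic V) {g : V →* Multiplicative ℤ}
    (hg : g ≠ 1) : ∃ f : V →* Multiplicative ℤ, Function.Surjective f ∧ Finite f.ker := by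
  obtain ⟨v, hv⟩ := DFunLike.ne_iff.1 hg
  have : Infinite g.range :=
    infinite_of_not_isOfFinOrder (⟨v, rfl⟩ : g v ∈ g.range)
      (not_isOfFinOrder_of_isMulTorsionFree hv)
  let e : Multiplicative ℤ ≃* g.range := intCyclicMulEquiv
  refine ⟨e.symm.toMonoidHom.comp g.rangeRestrict,
    e.symm.surjective.comp g.rangeRestrict_surjective, h.finite_ker fun h1 => hv ?_⟩
  simpa [Subtype.ext_iff] using DFunLike.congr_fun h1 v

theorem exists_surjective_int_of_mem_center (h : VirtuallyCyclic V) {z : V} (hz : z ∈ center V)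
    (hzo : ¬IsOfFinOrder z) :
    ∃ f : V →* Multiplicative ℤ, Function.Surjective f ∧ Finite f.ker := by
  have : Infinite V := .of_injective _ (injective_zpow_iff_not_isOfFinOrder.2 hzo)
  obtain ⟨c, hc, -, _⟩ := h.exists_zpowers_normal
  have : Infinite (zpowers c) := (infinite_zpowers.2 hc).to_subtype
  let ϕ : zpowers c ≃* Multiplicative ℤ := intCyclicMulEquiv.symm
  refine h.exists_surjective_int_of_ne_one (g := ϕ.toMonoidHom.transfer) fun h1 => ?_
  have htr := MonoidHom.transfer_eq_pow ϕ.toMonoidHom z fun k g₀ _ => by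
    rw [mul_assoc, ← mem_center_iff.1 (pow_mem hz k) g₀, inv_mul_cancel_left]
  rw [h1, MonoidHom.one_apply, eq_comm, MulEquiv.coe_toMonoidHom, map_eq_one_iff _ ϕ.injective,
    Subtype.ext_iff, coe_one] at htr
  exact hzo (isOfFinOrder_iff_pow_eq_one.2 ⟨_, FiniteIndex.index_ne_zero.bot_lt, htr⟩)

theorem exists_surjective_int_of_infinite_center (h : VirtuallyCyclic V) [Infinite (center V)] :
    ∃ f : V →* Multiplicative ℤ, Function.Surjective f ∧ Finite f.ker := by
  obtain ⟨z, hz, hzo⟩ := h.exists_not_isOfFinOrder_mem (center V)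
  exact h.exists_surjective_int_of_mem_center hz hzo

theorem exists_surjective_int_of_infinite_abelianization (h : VirtuallyCyclic V)
    [Infinite (Abelianization V)] :
    ∃ f : V →* Multiplicative ℤ, Function.Surjective f ∧ Finite f.ker := by
  have hof : Function.Surjective (Abelianization.of : V →* Abelianization V) :=
    QuotientGroup.mk_surjective
  have : Infinite (center (Abelianization V)) :=
    .of_injective (fun x => ⟨x, mem_center_iff.2 fun g => mul_comm g x⟩)
      fun _ _ hxy => congrArg Subtype.val hxy
  obtain ⟨f, hf, -⟩ := (h.of_surjective hof).exists_surjective_int_of_infinite_center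
  refine h.exists_surjective_int_of_ne_one (g := f.comp Abelianization.of) fun h1 => ?_
  obtain ⟨v, hv⟩ := hf.comp hof (.ofAdd 1)
  rw [Function.comp_apply, show f (Abelianization.of v) = 1 from DFunLike.congr_fun h1 v] at hv
  exact one_ne_zero (ofAdd_eq_one.1 hv.symm)

theorem exists_surjective_dihedral (h : VirtuallyCyclic V) [Infinite V]
    (hV : ¬∃ f : V →* Multiplicative ℤ, Function.Surjective f ∧ Finite f.ker) :
    ∃ f : V →* DihedralGroup 0, Function.Surjective f ∧ Finite f.ker := by
  obtain ⟨c, hc, _, -⟩ := h.exists_zpowers_normal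
  set ε := conjUnit hc
  obtain ⟨t, ht⟩ : ∃ t, ε t = -1 := by
    by_contra! hε
    refine hV (h.exists_surjective_int_of_mem_center (mem_center_iff.2 fun v => ?_) hc)
    exact (conjUnit_eq_one_iff hc).1 ((Int.units_eq_one_or _).resolve_right (hε v))
  let c' : ε.ker := ⟨c, (conjUnit_eq_one_iff hc).2 (Commute.refl c)⟩
  have hc' : ¬IsOfFinOrder c' := fun hfin => hc (by simpa using ε.ker.subtype.isOfFinOrder hfin)
  have hc'_center : c' ∈ center ε.ker :=
    mem_center_iff.2 fun w => Subtype.ext ((conjUnit_eq_one_iff hc).1 w.2)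
  obtain ⟨π, hπ, _⟩ := (h.subgroup ε.ker).exists_surjective_int_of_mem_center hc'_center hc'
  -- `w ↦ π (t w t⁻¹) * π w` kills `c`, since `t c t⁻¹ = c⁻¹`
  have hconj : ∀ w, π (MulAut.conjNormal t w) = (π w)⁻¹ := by
    have := (h.subgroup ε.ker).eq_one_of_map_eq_one
      (g := π.comp (MulAut.conjNormal t).toMonoidHom * π) hc' ?_
    · exact fun w => eq_inv_of_mul_eq_one_left (DFunLike.congr_fun this w)
    · have hc'_conj : MulAut.conjNormal t c' = c'⁻¹ := Subtype.ext <| by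
        rw [MulAut.conjNormal_apply, conj_eq_zpow_conjUnit hc, ht]
        simp [c']
      simp [hc'_conj]
  exact exists_surjective_dihedral_of_conj ε ht π hπ hconj

end VirtuallyCyclic

/-- For a virtually cyclic group `V` the following are equivalent: (i) `V` surjects onto `ℤ`
with finite kernel; (ii) the abelianization `H₁(V;ℤ)` of `V` is infinite; (iii) the center of
`V` is infinite.  Moreover an infinite virtually cyclic group not satisfying these conditions
surjects onto the infinite dihedral group `D∞` with finite kernel. -/
theorem stmt_14 :
    ∀ (V : Type) [Group V], VirtuallyCyclic V →
      ((∃ f : V →* Multiplicative ℤ, Function.Surjective f ∧ Finite f.ker) ↔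
        Infinite (Abelianization V)) ∧
      ((∃ f : V →* Multiplicative ℤ, Function.Surjective f ∧ Finite f.ker) ↔
        Infinite (Subgroup.center V)) ∧
      (Infinite V →
        ¬ (∃ f : V →* Multiplicative ℤ, Function.Surjective f ∧ Finite f.ker) →
        ∃ f : V →* DihedralGroup 0, Function.Surjective f ∧ Finite f.ker) := by
  intro V _ h
  exact ⟨⟨fun ⟨_, hf, _⟩ => infinite_abelianization_of_surjective hf,
      fun _ => h.exists_surjective_int_of_infinite_abelianization⟩,
    ⟨fun ⟨_, hf, _⟩ => infinite_center_of_surjective_int hf,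
      fun _ => h.exists_surjective_int_of_infinite_center⟩,
    fun _ hV => h.exists_surjective_dihedral hV⟩
end
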